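/- arXiv:2508.00275 — 6 statements merged into one kernel-verified Lean document; each statement's English description precedes it below -/
import Mathlib

section
/- Let τ ∈ (0,1), let K : ℝ → ℝ be a nonnegative measurable kernel with ∫_{-∞}^{∞} K(t) dt = 1 and finite first moment ζ₁ = ∫_{-∞}^{∞} |t| K(t) dt < ∞, and let h > 0. Then the convolution-smoothed quantile loss ℓ_h(r) = (1/h) ∫_{-∞}^{∞} ρ_τ(t) K((t − r)/h) dt is finite for every r ∈ ℝ, is differentiable on ℝ, and its derivative is ℓ_h′(r) = τ − K̄(−r/h) for every r ∈ ℝ, where K̄(t) = ∫_{-∞}^{t} K(s) ds. -/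
open MeasureTheory

/-- The quantile loss `ρ_τ(t) = t (τ - 1{t<0})`. -/
noncomputable def rho (τ t : ℝ) : ℝ := t * (τ - if t < 0 then 1 else 0)

/-- The integrated kernel `K̄(t) = ∫_{-∞}^t K(s) ds`. -/
noncomputable def Kbar (K : ℝ → ℝ) (t : ℝ) : ℝ := ∫ s in Set.Iic t, K s

/-- The convolution-smoothed quantile loss
`ℓ_h(r) = (1/h) ∫ ρ_τ(t) K((t - r)/h) dt`. -/
noncomputable def smoothedLoss (τ : ℝ) (K : ℝ → ℝ) (h r : ℝ) : ℝ :=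
  (1 / h) * ∫ t, rho τ t * K ((t - r) / h)

lemma rho_eq (τ t : ℝ) : rho τ t = τ * t - min t 0 := by
  unfold rho
  rcases lt_or_ge t 0 with ht | ht
  · simp only [if_pos ht, min_eq_left ht.le]; ring
  · simp only [not_lt.2 ht, if_false, min_eq_right ht]; ring

lemma rho_meas (τ : ℝ) : Measurable (rho τ) := by
  unfold rho
  exact measurable_id.mul (measurable_const.sub
    (Measurable.ite measurableSet_Iio measurable_const measurable_const))

lemma rho_abs_le {τ : ℝ} (h0 : 0 < τ) (h1 : τ < 1) (t : ℝ) : |rho τ t| ≤ |t| := by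
  unfold rho
  rw [abs_mul]
  have hb : |τ - if t < 0 then 1 else 0| ≤ 1 := by
    split_ifs <;> rw [abs_le] <;> constructor <;> linarith
  calc |t| * |τ - if t < 0 then 1 else 0| ≤ |t| * 1 :=
        mul_le_mul_of_nonneg_left hb (abs_nonneg _)
    _ = |t| := mul_one _

lemma rho_lip {τ : ℝ} (h0 : 0 < τ) (h1 : τ < 1) (a b : ℝ) :
    |rho τ a - rho τ b| ≤ 2 * |a - b| := by
  rw [rho_eq, rho_eq]
  have h2 : |min a 0 - min b 0| ≤ |a - b| := by
    refine (abs_min_sub_min_le_max a 0 b 0).trans ?_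
    simp
  calc |τ * a - min a 0 - (τ * b - min b 0)|
      = |τ * (a - b) - (min a 0 - min b 0)| := by ring_nf
    _ ≤ |τ * (a - b)| + |min a 0 - min b 0| := abs_sub _ _
    _ ≤ τ * |a - b| + |a - b| := by
        rw [abs_mul, abs_of_pos h0]; exact add_le_add le_rfl h2
    _ ≤ 2 * |a - b| := by nlinarith [abs_nonneg (a - b)]

/-- for `τ ∈ (0,1)`, a nonnegative measurable kernel `K` with
`∫ K = 1` and finite first moment, and `h > 0`, the convolution-smoothed
quantile loss is finite (the integrand is integrable) for every `r`, is
differentiable on `ℝ`, and `ℓ_h'(r) = τ - K̄(-r/h)`. -/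
theorem stmt0 (τ : ℝ) (hτ : τ ∈ Set.Ioo (0 : ℝ) 1)
    (K : ℝ → ℝ) (hKmeas : Measurable K) (hKnonneg : ∀ t, 0 ≤ K t)
    (hKint : ∫ t, K t = 1)
    (hζ1 : Integrable (fun t => |t| * K t))
    (h : ℝ) (hh : 0 < h) :
    (∀ r : ℝ, Integrable (fun t => rho τ t * K ((t - r) / h))) ∧
      (∀ r : ℝ, HasDerivAt (smoothedLoss τ K h) (τ - Kbar K (-r / h)) r) := by
  obtain ⟨hτ0, hτ1⟩ := hτ
  have hKL1 : Integrable K := by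
    by_contra hc
    rw [integral_undef hc] at hKint
    norm_num at hKint
  -- the substituted integrand
  set G : ℝ → ℝ → ℝ := fun r u => rho τ (h * u + r) * K u with hG
  have hG_meas : ∀ r, AEStronglyMeasurable (G r) volume := fun r =>
    (((rho_meas τ).comp ((measurable_const.mul measurable_id).add_const r)).mul
      hKmeas).aestronglyMeasurable
  have hG_int : ∀ r, Integrable (G r) := by
    intro r
    refine Integrable.mono' ((hKL1.const_mul |r|).add (hζ1.const_mul |h|)) (hG_meas r) ?_
    filter_upwards with u
    have h1 : |rho τ (h * u + r)| ≤ |h * u + r| := rho_abs_le hτ0 hτ1 _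
    have h2 : |h * u + r| ≤ |h| * |u| + |r| := by
      calc |h * u + r| ≤ |h * u| + |r| := abs_add_le _ _
        _ = |h| * |u| + |r| := by rw [abs_mul]
    have hKu : |K u| = K u := abs_of_nonneg (hKnonneg u)
    calc ‖rho τ (h * u + r) * K u‖ = |rho τ (h * u + r)| * K u := by
          rw [Real.norm_eq_abs, abs_mul, hKu]
      _ ≤ (|h| * |u| + |r|) * K u :=
          mul_le_mul_of_nonneg_right (h1.trans h2) (hKnonneg u)
      _ = |r| * K u + |h| * (|u| * K u) := by ring
  -- part 1: integrability of the original integrand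
  have hpart1 : ∀ r : ℝ, Integrable (fun t => rho τ t * K ((t - r) / h)) := by
    intro r
    have hcv : Integrable (fun t => G r ((t - r) / h)) := by
      have h1 : Integrable (fun x : ℝ => G r (x * h⁻¹)) :=
        (hG_int r).comp_mul_right' (inv_ne_zero hh.ne')
      have h2 : Integrable (fun t : ℝ => (fun x : ℝ => G r (x * h⁻¹)) (t + -r)) :=
        h1.comp_add_right (-r)
      simpa [sub_eq_add_neg, div_eq_mul_inv] using h2
    refine hcv.congr ?_
    filter_upwards with t
    have : h * ((t - r) / h) + r = t := by field_simp; ring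
    simp only [hG, this]
  -- smoothedLoss rewritten via substitution
  have hsmooth : smoothedLoss τ K h = fun r => ∫ u, G r u := by
    funext r
    unfold smoothedLoss
    have e0 : (fun t : ℝ => rho τ t * K ((t - r) / h)) = fun t => G r ((t - r) / h) := by
      funext t
      have : h * ((t - r) / h) + r = t := by field_simp; ring
      simp only [hG, this]
    rw [e0]
    have e1 : (fun t : ℝ => G r ((t - r) / h)) = fun t => (fun s => G r (s / h)) (t + -r) := by
      funext t; rw [sub_eq_add_neg]
    rw [e1, integral_add_right_eq_self (fun s => G r (s / h)) (-r),
      MeasureTheory.Measure.integral_comp_div (G r) h, smul_eq_mul, abs_of_pos hh]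
    field_simp
  refine ⟨hpart1, fun r => ?_⟩
  -- derivative via dominated differentiation
  set F' : ℝ → ℝ := fun u => (τ - if h * u + r < 0 then 1 else 0) * K u with hF'
  have hF'_meas : AEStronglyMeasurable F' volume := by
    refine ((measurable_const.sub ?_).mul hKmeas).aestronglyMeasurable
    exact Measurable.ite
      (measurableSet_lt ((measurable_const.mul measurable_id).add_const r) measurable_const)
      measurable_const measurable_const
  have hae : ∀ᵐ u : ℝ, h * u + r ≠ 0 := by
    rw [MeasureTheory.ae_iff]
    have hs : {u : ℝ | ¬ h * u + r ≠ 0} = {-r / h} := by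
      ext u
      simp only [Set.mem_setOf_eq, not_not, Set.mem_singleton_iff]
      constructor
      · intro hu
        field_simp
        linarith
      · intro hu
        subst hu
        field_simp
        ring
    rw [hs]
    exact measure_singleton _
  have key := hasDerivAt_integral_of_dominated_loc_of_lip (F := fun x u => G x u) (x₀ := r)
    (s := Set.univ) (bound := fun u => 2 * K u) Filter.univ_mem
    (Filter.Eventually.of_forall fun x => hG_meas x) (hG_int r) hF'_meas
    ?_ (hKL1.const_mul 2) ?_
  · rw [hsmooth]
    convert key.2 using 1
    case e'_4 => rfl
    case e'_5 => rfl
    -- ∫ F' = τ - Kbar K (-r/h)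
    have h1 : F' = fun u => τ * K u - Set.indicator (Set.Iio (-r / h)) K u := by
      funext u
      have hiff : h * u + r < 0 ↔ u ∈ Set.Iio (-r / h) := by
        rw [Set.mem_Iio]
        constructor
        · intro hu
          rw [lt_div_iff₀ hh]
          · nlinarith
        · intro hu
          rw [lt_div_iff₀ hh] at hu
          nlinarith
      by_cases hu : h * u + r < 0
      · rw [hF']
        simp only [if_pos hu, Set.indicator_of_mem (hiff.1 hu)]
        ring
      · rw [hF']
        simp only [if_neg hu, Set.indicator_of_notMem (fun hmem => hu (hiff.2 hmem))]
        ring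
    rw [h1, integral_sub (hKL1.const_mul τ) (hKL1.indicator measurableSet_Iio),
      integral_const_mul, hKint, integral_indicator measurableSet_Iio,
      setIntegral_congr_set (Iio_ae_eq_Iic), mul_one]
    rfl
  · -- Lipschitz
    filter_upwards with u
    have hC : Real.nnabs (2 * K u) = (⟨2 * K u, mul_nonneg (by norm_num) (hKnonneg u)⟩ : NNReal) := by
      ext
      simp [Real.coe_nnabs, abs_of_nonneg, hKnonneg u]; rfl
    apply LipschitzOnWith.mono _ (Set.subset_univ _)
    rw [lipschitzOnWith_univ]
    intro x y
    rw [edist_dist, edist_dist, Real.dist_eq, Real.dist_eq]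
    rw [← ENNReal.ofReal_coe_nnreal, ← ENNReal.ofReal_mul (by positivity)]
    apply ENNReal.ofReal_le_ofReal
    have : G x u - G y u = (rho τ (h * u + x) - rho τ (h * u + y)) * K u := by
      simp only [hG]; ring
    rw [this, abs_mul, abs_of_nonneg (hKnonneg u)]
    have hl := rho_lip hτ0 hτ1 (h * u + x) (h * u + y)
    have he : h * u + x - (h * u + y) = x - y := by ring
    rw [he] at hl
    calc |rho τ (h * u + x) - rho τ (h * u + y)| * K u
        ≤ 2 * |x - y| * K u := mul_le_mul_of_nonneg_right hl (hKnonneg u)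
      _ = ↑(Real.nnabs (2 * K u)) * |x - y| := by
          rw [hC]; show _ = (2 * K u) * |x - y|; ring
  · -- a.e. differentiability
    filter_upwards [hae] with u hu
    rcases hu.lt_or_gt with hneg | hpos
    · -- h*u + r < 0 : rho τ s = s * (τ - 1) locally
      have hev : ∀ᶠ x in nhds r, h * u + x < 0 := by
        have ht : Filter.Tendsto (fun x : ℝ => h * u + x) (nhds r) (nhds (h * u + r)) :=
          (continuous_const.add continuous_id).tendsto r
        exact ht.eventually (eventually_lt_nhds hneg)
      have hlin : HasDerivAt (fun x => (h * u + x) * ((τ - 1) * K u)) ((τ - 1) * K u) r := by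
        simpa using ((hasDerivAt_id r).const_add (h * u)).mul_const ((τ - 1) * K u)
      have heq : (fun x => (h * u + x) * ((τ - 1) * K u)) =ᶠ[nhds r] fun x => G x u := by
        filter_upwards [hev] with x hx
        simp only [hG, rho, if_pos hx]
        ring
      have := hlin.congr_of_eventuallyEq heq.symm
      convert this using 1
      simp [hF', if_pos hneg]
    · -- 0 < h*u + r : rho τ s = s * τ locally
      have hev : ∀ᶠ x in nhds r, 0 < h * u + x := by
        have ht : Filter.Tendsto (fun x : ℝ => h * u + x) (nhds r) (nhds (h * u + r)) :=
          (continuous_const.add continuous_id).tendsto r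
        exact ht.eventually (eventually_gt_nhds hpos)
      have hlin : HasDerivAt (fun x => (h * u + x) * (τ * K u)) (τ * K u) r := by
        simpa using ((hasDerivAt_id r).const_add (h * u)).mul_const (τ * K u)
      have heq : (fun x => (h * u + x) * (τ * K u)) =ᶠ[nhds r] fun x => G x u := by
        filter_upwards [hev] with x hx
        simp only [hG, rho, if_neg (not_lt.2 hx.le)]
        ring
      have := hlin.congr_of_eventuallyEq heq.symm
      convert this using 1
      simp [hF', if_neg (not_lt.2 hpos.le)]
end

section
/- Let τ ∈ (0,1), let K : ℝ → ℝ be a nonnegative measurable kernel with ∫_{-∞}^{∞} K(t) dt = 1, K symmetric (K(−t) = K(t) for all t), and ζ₁ = ∫_{-∞}^{∞} |t| K(t) dt < ∞, and let h > 0. Then for every r ∈ ℝ, ρ_τ(r) ≤ ℓ_h(r) ≤ ρ_τ(r) + max(τ, 1−τ) · h · ζ₁, where ℓ_h is the convolution-smoothed quantile loss. In particular ℓ_h converges to ρ_τ uniformly on ℝ as h → 0⁺. -/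
/-!
Writing `ℓ_h(r) = ∫ ρ_τ(r + h u) K(u) du`, both bounds are pointwise estimates integrated against
the probability density `K`. Since `ρ_τ(t) = max(τ t, (τ - 1) t)` is a maximum of two linear
functions and `∫ u K(u) du = 0` by symmetry, each linear minorant integrates to its value at `r`,
which is Jensen's inequality `ρ_τ(r) ≤ ℓ_h(r)`. The same description shows that `ρ_τ` is
subadditive with `ρ_τ(s) ≤ max(τ, 1 - τ) |s|`, so `ρ_τ(r + h u) ≤ ρ_τ(r) + max(τ, 1 - τ) h |u|`,
and integrating gives the upper bound. The gap `ℓ_h - ρ_τ` is thus at most linear in `h`,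
uniformly in `r`.
-/

open MeasureTheory Filter Topology

lemma rho_eq_max (τ t : ℝ) : rho τ t = max (τ * t) ((τ - 1) * t) := by
  unfold rho
  rcases lt_or_ge t 0 with ht | ht
  · rw [if_pos ht, max_eq_right (by nlinarith)]; ring
  · rw [if_neg (not_lt.2 ht), max_eq_left (by nlinarith)]; ring

lemma continuous_rho (τ : ℝ) : Continuous (rho τ) := by
  simp only [funext (rho_eq_max τ)]
  fun_prop

lemma abs_rho_le (τ t : ℝ) : |rho τ t| ≤ (|τ| + 1) * |t| := by
  rw [rho, abs_mul, mul_comm]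
  gcongr
  calc |τ - if t < 0 then 1 else 0| ≤ |τ| + |if t < 0 then (1 : ℝ) else 0| := abs_sub _ _
    _ ≤ |τ| + 1 := by gcongr; split_ifs <;> simp

lemma rho_add_le (τ r s : ℝ) : rho τ (r + s) ≤ rho τ r + rho τ s := by
  simp only [rho_eq_max, mul_add]
  exact max_add_add_le_max_add_max

lemma rho_le_max_mul_abs (τ t : ℝ) : rho τ t ≤ max τ (1 - τ) * |t| := by
  rw [rho_eq_max]
  rcases le_or_gt 0 t with ht | ht
  · rw [abs_of_nonneg ht]
    exact max_le (by gcongr; exact le_max_left _ _) (by nlinarith [le_max_left τ (1 - τ)])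
  · rw [abs_of_neg ht]
    exact max_le (by nlinarith [le_max_right τ (1 - τ)]) (by nlinarith [le_max_right τ (1 - τ)])

lemma smoothedLoss_eq_integral (τ : ℝ) (K : ℝ → ℝ) {h : ℝ} (hh : 0 < h) (r : ℝ) :
    smoothedLoss τ K h r = ∫ u, rho τ (r + h * u) * K u := by
  set g : ℝ → ℝ := fun t => rho τ t * K ((t - r) / h)
  have hg : ∀ u, g (r + h * u) = rho τ (r + h * u) * K u := fun u => by
    simp only [g, add_sub_cancel_left, mul_div_cancel_left₀ u hh.ne']
  calc smoothedLoss τ K h r = h⁻¹ * ∫ s, g (r + s) := by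
        rw [smoothedLoss, integral_add_left_eq_self, one_div]
    _ = ∫ u, g (r + h * u) := by
        rw [Measure.integral_comp_mul_left (fun s => g (r + s)), abs_of_pos (inv_pos.2 hh),
          smul_eq_mul]
    _ = _ := by simp only [hg]

section Kernel

variable {K : ℝ → ℝ}

lemma integral_id_mul_eq_zero_of_even (hKsymm : ∀ t, K (-t) = K t) : ∫ u, u * K u = 0 := by
  have h := integral_neg_eq_self (fun u : ℝ => u * K u) volume
  simp only [hKsymm, neg_mul, integral_neg] at h
  linarith

lemma integrable_id_mul_of_integrable_abs_mul (hKnonneg : ∀ t, 0 ≤ K t) (hK : Integrable K)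
    (hζ1 : Integrable fun t => |t| * K t) : Integrable fun u => u * K u :=
  hζ1.mono (continuous_id.aestronglyMeasurable.mul hK.aestronglyMeasurable) <|
    ae_of_all _ fun u => by simp [abs_of_nonneg (hKnonneg u)]

lemma integral_affine_mul_eq (hKint : ∫ t, K t = 1) (hKsymm : ∀ t, K (-t) = K t)
    (huK : Integrable fun u => u * K u) (a b : ℝ) : ∫ u, (a + b * u) * K u = a := by
  have hK := integrable_of_integral_eq_one hKint
  simp only [add_mul, mul_assoc]
  rw [integral_add (hK.const_mul a) (huK.const_mul b), integral_const_mul, integral_const_mul,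
    hKint, integral_id_mul_eq_zero_of_even hKsymm]
  ring

lemma integrable_rho_affine_mul (τ : ℝ) (hKnonneg : ∀ t, 0 ≤ K t) (hK : Integrable K)
    (hζ1 : Integrable fun t => |t| * K t) (r h : ℝ) :
    Integrable fun u => rho τ (r + h * u) * K u := by
  refine ((hK.const_mul ((|τ| + 1) * |r|)).add (hζ1.const_mul ((|τ| + 1) * |h|))).mono'
    (((continuous_rho τ).comp (by fun_prop)).aestronglyMeasurable.mul hK.aestronglyMeasurable)
    (ae_of_all _ fun u => ?_)
  have hrho : |rho τ (r + h * u)| ≤ (|τ| + 1) * (|r| + |h| * |u|) :=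
    (abs_rho_le τ _).trans <| by gcongr; exact (abs_add_le _ _).trans_eq (by rw [abs_mul])
  rw [Pi.add_apply, Real.norm_eq_abs, abs_mul, abs_of_nonneg (hKnonneg u)]
  nlinarith [hKnonneg u]

theorem rho_le_integral_rho_affine_mul (τ : ℝ) (hKnonneg : ∀ t, 0 ≤ K t)
    (hKint : ∫ t, K t = 1) (hKsymm : ∀ t, K (-t) = K t) (hζ1 : Integrable fun t => |t| * K t)
    (r h : ℝ) : rho τ r ≤ ∫ u, rho τ (r + h * u) * K u := by
  have hK := integrable_of_integral_eq_one hKint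
  have huK := integrable_id_mul_of_integrable_abs_mul hKnonneg hK hζ1
  have minorant : ∀ c : ℝ, (∀ t, c * t ≤ rho τ t) → c * r ≤ ∫ u, rho τ (r + h * u) * K u := by
    intro c hc
    calc c * r = ∫ u, (c * r + c * h * u) * K u :=
          (integral_affine_mul_eq hKint hKsymm huK _ _).symm
      _ ≤ ∫ u, rho τ (r + h * u) * K u := by
        refine integral_mono ?_ (integrable_rho_affine_mul τ hKnonneg hK hζ1 r h) fun u => ?_
        · exact ((hK.const_mul (c * r)).add (huK.const_mul (c * h))).congr
            (ae_of_all _ fun u => by simp only [Pi.add_apply]; ring)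
        · exact mul_le_mul_of_nonneg_right ((hc _).trans_eq' (by ring)) (hKnonneg u)
  rw [rho_eq_max]
  exact max_le (minorant τ fun t => (rho_eq_max τ t).symm ▸ le_max_left _ _)
    (minorant (τ - 1) fun t => (rho_eq_max τ t).symm ▸ le_max_right _ _)

theorem integral_rho_affine_mul_le (τ : ℝ) (hKnonneg : ∀ t, 0 ≤ K t)
    (hKint : ∫ t, K t = 1) (hζ1 : Integrable fun t => |t| * K t) (r : ℝ) {h : ℝ} (hh : 0 ≤ h) :
    ∫ u, rho τ (r + h * u) * K u ≤ rho τ r + max τ (1 - τ) * h * ∫ t, |t| * K t := by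
  have hK := integrable_of_integral_eq_one hKint
  have hbound : ∀ u, rho τ (r + h * u) ≤ rho τ r + max τ (1 - τ) * h * |u| := fun u =>
    calc rho τ (r + h * u) ≤ rho τ r + rho τ (h * u) := rho_add_le τ r _
      _ ≤ rho τ r + max τ (1 - τ) * h * |u| := by
        have := rho_le_max_mul_abs τ (h * u)
        rw [abs_mul, abs_of_nonneg hh] at this
        linarith
  have hmajorant : Integrable fun u => rho τ r * K u + max τ (1 - τ) * h * (|u| * K u) :=
    (hK.const_mul _).add (hζ1.const_mul _)
  calc ∫ u, rho τ (r + h * u) * K u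
      ≤ ∫ u, rho τ r * K u + max τ (1 - τ) * h * (|u| * K u) := by
        refine integral_mono (integrable_rho_affine_mul τ hKnonneg hK hζ1 r h) hmajorant
          fun u => ?_
        nlinarith [hbound u, hKnonneg u]
    _ = rho τ r + max τ (1 - τ) * h * ∫ t, |t| * K t := by
        rw [integral_add (hK.const_mul _) (hζ1.const_mul _), integral_const_mul,
          integral_const_mul, hKint, mul_one]

end Kernel

lemma tendstoUniformly_of_dist_le {ι β α : Type*} [PseudoMetricSpace α] {F : ι → β → α}
    {f : β → α} {p : Filter ι} {g : ι → ℝ} (hg : Tendsto g p (𝓝 0))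
    (hFg : ∀ᶠ i in p, ∀ x, dist (f x) (F i x) ≤ g i) : TendstoUniformly F f p := by
  rw [Metric.tendstoUniformly_iff]
  intro ε hε
  filter_upwards [hFg, hg.eventually (gt_mem_nhds hε)] with i hi hgi x
  exact (hi x).trans_lt hgi

theorem stmt2_general (τ : ℝ)
    (K : ℝ → ℝ) (hKnonneg : ∀ t, 0 ≤ K t)
    (hKint : ∫ t, K t = 1)
    (hKsymm : ∀ t, K (-t) = K t)
    (hζ1 : Integrable (fun t => |t| * K t)) :
    (∀ h : ℝ, 0 < h → ∀ r : ℝ,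
        rho τ r ≤ smoothedLoss τ K h r ∧
          smoothedLoss τ K h r ≤ rho τ r + max τ (1 - τ) * h * (∫ t, |t| * K t)) ∧
      TendstoUniformly (fun h => smoothedLoss τ K h) (rho τ)
        (nhdsWithin (0 : ℝ) (Set.Ioi 0)) := by
  have bounds : ∀ h : ℝ, 0 < h → ∀ r : ℝ,
      rho τ r ≤ smoothedLoss τ K h r ∧
        smoothedLoss τ K h r ≤ rho τ r + max τ (1 - τ) * h * (∫ t, |t| * K t) := by
    intro h hh r
    rw [smoothedLoss_eq_integral τ K hh r]
    exact ⟨rho_le_integral_rho_affine_mul τ hKnonneg hKint hKsymm hζ1 r h,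
      integral_rho_affine_mul_le τ hKnonneg hKint hζ1 r hh.le⟩
  refine ⟨bounds, tendstoUniformly_of_dist_le (g := fun h => max τ (1 - τ) * h * ∫ t, |t| * K t)
    ?_ ?_⟩
  · exact tendsto_nhdsWithin_of_tendsto_nhds <| (show Continuous fun h : ℝ => max τ (1 - τ) * h * ∫ t, |t| * K t by fun_prop).tendsto'
      0 0 (by simp)
  · filter_upwards [self_mem_nhdsWithin] with h (hh : 0 < h) r
    obtain ⟨hlow, hupp⟩ := bounds h hh r
    rw [Real.dist_eq, abs_sub_comm, abs_of_nonneg (sub_nonneg.2 hlow)]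
    linarith

/-- for `τ ∈ (0,1)`, a nonnegative measurable symmetric kernel
`K` with `∫ K = 1` and finite first moment `ζ₁ = ∫ |t| K(t) dt`, and any
`h > 0`, one has `ρ_τ(r) ≤ ℓ_h(r) ≤ ρ_τ(r) + max(τ, 1-τ)·h·ζ₁` for all `r`;
in particular `ℓ_h → ρ_τ` uniformly on `ℝ` as `h → 0⁺`. -/
theorem stmt2 (τ : ℝ) (hτ : τ ∈ Set.Ioo (0 : ℝ) 1)
    (K : ℝ → ℝ) (hKmeas : Measurable K) (hKnonneg : ∀ t, 0 ≤ K t)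
    (hKint : ∫ t, K t = 1)
    (hKsymm : ∀ t, K (-t) = K t)
    (hζ1 : Integrable (fun t => |t| * K t)) :
    (∀ h : ℝ, 0 < h → ∀ r : ℝ,
        rho τ r ≤ smoothedLoss τ K h r ∧
          smoothedLoss τ K h r ≤ rho τ r + max τ (1 - τ) * h * (∫ t, |t| * K t)) ∧
      TendstoUniformly (fun h => smoothedLoss τ K h) (rho τ)
        (nhdsWithin (0 : ℝ) (Set.Ioi 0)) :=
  stmt2_general τ K hKnonneg hKint hKsymm hζ1
end

section
/- Let τ ∈ (0,1) and h > 0. Let ε be a real random variable having a density g with respect to Lebesgue measure such that g is Lipschitz with constant L₀ > 0 and P(ε ≤ 0) = τ. Let K : ℝ → ℝ be a nonnegative measurable kernel with ∫_{-∞}^{∞} K(t) dt = 1, K symmetric (K(−t) = K(t) for all t), and ζ₂ = ∫_{-∞}^{∞} t² K(t) dt < ∞. Then | E[ K̄(−ε/h) ] − τ | ≤ (L₀/2) · ζ₂ · h², where K̄(t) = ∫_{-∞}^{t} K(s) ds. -/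
open MeasureTheory

/-- let `τ ∈ (0,1)`, `h > 0`, and let `ε` be a real random
variable with a Lipschitz density `g` (Lipschitz constant `L₀ > 0`) with
respect to Lebesgue measure, satisfying `P(ε ≤ 0) = τ`. Let `K` be a
nonnegative measurable symmetric kernel with `∫ K = 1` and finite second
moment `ζ₂ = ∫ t² K(t) dt`. Then `|E[K̄(−ε/h)] − τ| ≤ (L₀/2) ζ₂ h²`. -/
theorem stmt10 {Ω : Type*} [MeasurableSpace Ω] (P : Measure Ω)
    [IsProbabilityMeasure P]
    (τ : ℝ) (hτ : τ ∈ Set.Ioo (0 : ℝ) 1) (h : ℝ) (hh : 0 < h)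
    (ε : Ω → ℝ) (hεmeas : Measurable ε)
    (g : ℝ → ℝ) (L₀ : NNReal) (hL₀ : 0 < L₀) (hgLip : LipschitzWith L₀ g)
    (hdens : Measure.map ε P = volume.withDensity (fun x => ENNReal.ofReal (g x)))
    (hquant : P {ω | ε ω ≤ 0} = ENNReal.ofReal τ)
    (K : ℝ → ℝ) (hKmeas : Measurable K) (hKnonneg : ∀ t, 0 ≤ K t)
    (hKint : ∫ t, K t = 1) (hKsymm : ∀ t, K (-t) = K t)
    (hζ2 : Integrable (fun t => t ^ 2 * K t)) :
    |(∫ ω, Kbar K (-(ε ω) / h) ∂P) - τ| ≤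
      ((L₀ : ℝ) / 2) * (∫ t, t ^ 2 * K t) * h ^ 2 := by
  obtain ⟨hτ0, hτ1⟩ := hτ
  -- positive part of the density
  set g' : ℝ → ℝ := fun x => max (g x) 0 with hg'def
  have hg'lip : LipschitzWith L₀ g' := hgLip.max_const 0
  have hg'nn : ∀ x, 0 ≤ g' x := fun x => le_max_right _ _
  have hg'cont : Continuous g' := hg'lip.continuous
  have hofReal : ∀ x, ENNReal.ofReal (g x) = ENNReal.ofReal (g' x) := by
    intro x
    rcases le_total (g x) 0 with h' | h'
    · simp [hg'def, max_eq_right h', ENNReal.ofReal_of_nonpos h']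
    · simp [hg'def, max_eq_left h']
  have hdens' : Measure.map ε P = volume.withDensity (fun x => ENNReal.ofReal (g' x)) := by
    rw [hdens]; congr 1; funext x; exact hofReal x
  -- K is integrable
  have hKintg : Integrable K := by
    by_contra hc
    rw [MeasureTheory.integral_undef hc] at hKint
    norm_num at hKint
  -- g' is integrable
  have hg'lint : (∫⁻ x, ENNReal.ofReal (g' x)) = 1 := by
    have h1 : (Measure.map ε P) Set.univ = 1 := by
      rw [Measure.map_apply hεmeas MeasurableSet.univ]; simp
    rw [hdens'] at h1
    simpa [withDensity_apply _ MeasurableSet.univ] using h1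
  have hg'int : Integrable g' := by
    refine ⟨hg'cont.aestronglyMeasurable, ?_⟩
    rw [hasFiniteIntegral_iff_ofReal (Filter.Eventually.of_forall hg'nn), hg'lint]
    exact ENNReal.one_lt_top
  -- the CDF of ε
  set G : ℝ → ℝ := fun u => ∫ x in Set.Iic u, g' x with hGdef
  have hGnn : ∀ u, 0 ≤ G u := fun u =>
    setIntegral_nonneg measurableSet_Iic fun x _ => hg'nn x
  have hG_eq : ∀ u, P {ω | ε ω ≤ u} = ENNReal.ofReal (G u) := by
    intro u
    have h1 : {ω | ε ω ≤ u} = ε ⁻¹' Set.Iic u := rfl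
    rw [h1, ← Measure.map_apply hεmeas measurableSet_Iic, hdens',
      withDensity_apply _ measurableSet_Iic,
      ← ofReal_integral_eq_lintegral_ofReal hg'int.integrableOn
        (Filter.Eventually.of_forall hg'nn)]
  have hG0 : G 0 = τ := by
    have h1 := hG_eq 0
    rw [hquant] at h1
    exact ((ENNReal.ofReal_eq_ofReal_iff hτ0.le (hGnn 0)).mp h1).symm
  have hGle1 : ∀ u, G u ≤ 1 := by
    intro u
    have h1 : ENNReal.ofReal (G u) ≤ 1 := by rw [← hG_eq u]; exact prob_le_one
    exact ENNReal.ofReal_le_one.mp h1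
  have hGmono : Monotone G := by
    intro u v huv
    exact setIntegral_mono_set hg'int.integrableOn
      (Filter.Eventually.of_forall fun x => hg'nn x)
      (HasSubset.Subset.eventuallyLE (Set.Iic_subset_Iic.mpr huv))
  have hGmeas : Measurable G := hGmono.measurable
  set g0 : ℝ := g' 0 with hg0def
  -- second-order Taylor-type estimate from the Lipschitz bound
  have hGdiff : ∀ b : ℝ, |G b - G 0 - b * g0| ≤ (L₀ : ℝ) / 2 * b ^ 2 := by
    intro b
    have hsub : G b - G 0 = ∫ x in (0 : ℝ)..b, g' x :=
      intervalIntegral.integral_Iic_sub_Iic hg'int.integrableOn hg'int.integrableOn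
    have hconst : b * g0 = ∫ _x in (0 : ℝ)..b, g0 := by
      rw [intervalIntegral.integral_const]; simp [mul_comm]
    have hii : IntervalIntegrable g' volume 0 b := hg'int.intervalIntegrable
    rw [hsub, hconst, ← intervalIntegral.integral_sub hii (intervalIntegrable_const)]
    have hbnd : ∀ᵐ t ∂volume.restrict (Set.uIoc (0:ℝ) b),
        ‖g' t - g0‖ ≤ (L₀ : ℝ) * |t| := by
      refine Filter.Eventually.of_forall fun t => ?_
      have h1 := hg'lip.dist_le_mul t 0
      simpa [Real.dist_eq] using h1
    have habs : IntervalIntegrable (fun t => (L₀ : ℝ) * |t|) volume 0 b :=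
      (continuous_const.mul continuous_abs).intervalIntegrable _ _
    refine le_trans (intervalIntegral.norm_integral_le_abs_of_norm_le hbnd habs) ?_
    have hval : abs (∫ t in (0:ℝ)..b, (L₀ : ℝ) * |t|) = (L₀ : ℝ) / 2 * b ^ 2 := by
      rcases le_total 0 b with hb | hb
      · have he : Set.EqOn (fun t => (L₀ : ℝ) * |t|) (fun t => (L₀ : ℝ) * t)
            (Set.uIcc 0 b) := by
          intro t ht
          rw [Set.uIcc_of_le hb] at ht
          show (L₀ : ℝ) * |t| = (L₀ : ℝ) * t
          rw [abs_of_nonneg ht.1]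
        rw [intervalIntegral.integral_congr he, intervalIntegral.integral_const_mul,
          integral_id]
        have he2 : (L₀ : ℝ) * ((b ^ 2 - 0 ^ 2) / 2) = (L₀ : ℝ) / 2 * b ^ 2 := by ring
        rw [he2, abs_of_nonneg (by positivity)]
      · have he : Set.EqOn (fun t => (L₀ : ℝ) * |t|) (fun t => (L₀ : ℝ) * (-t))
            (Set.uIcc 0 b) := by
          intro t ht
          rw [Set.uIcc_of_ge hb] at ht
          show (L₀ : ℝ) * |t| = (L₀ : ℝ) * (-t)
          rw [abs_of_nonpos ht.2]
        rw [intervalIntegral.integral_congr he]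
        have : ∫ t in (0:ℝ)..b, (L₀ : ℝ) * (-t) = -((L₀ : ℝ) * (b ^ 2 / 2)) := by
          rw [intervalIntegral.integral_const_mul, intervalIntegral.integral_neg,
            integral_id]
          ring
        rw [this, abs_neg, abs_of_nonneg (by positivity)]
        ring
    rw [hval]
  -- Fubini setup
  set S : Set (Ω × ℝ) := {p | ε p.1 ≤ -p.2 * h} with hSdef
  have hSmeas : MeasurableSet S :=
    measurableSet_le (hεmeas.comp measurable_fst) (measurable_snd.neg.mul_const h)
  set F : Ω × ℝ → ℝ := fun p => S.indicator (fun q => K q.2) p with hFdef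
  have hFmeas : Measurable F := (hKmeas.comp measurable_snd).indicator hSmeas
  have hKsnd_int : Integrable (fun p : Ω × ℝ => K p.2) (P.prod volume) := by
    have hmap : (P.prod volume).map Prod.snd = (volume : Measure ℝ) := by
      rw [Measure.map_snd_prod, measure_univ, one_smul]
    have h1 : Integrable K ((P.prod volume).map Prod.snd) := by rwa [hmap]
    exact (integrable_map_measure hKmeas.aestronglyMeasurable
      measurable_snd.aemeasurable).mp h1
  have hFint : Integrable F (P.prod volume) := by
    refine hKsnd_int.mono' hFmeas.aestronglyMeasurable
      (Filter.Eventually.of_forall fun p => ?_)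
    rw [Real.norm_eq_abs, abs_of_nonneg (Set.indicator_nonneg (fun q _ => hKnonneg q.2) p)]
    exact Set.indicator_le_self' (fun q _ => hKnonneg q.2) p
  have hswap := MeasureTheory.integral_integral_swap
    (f := fun (ω : Ω) (s : ℝ) => F (ω, s)) (μ := P) (ν := volume) hFint
  have hinner : ∀ ω, (∫ s, F (ω, s)) = Kbar K (-(ε ω) / h) := by
    intro ω
    have hset : (fun s => F (ω, s)) = (Set.Iic (-(ε ω) / h)).indicator K := by
      funext s
      have hiff : ((ω, s) ∈ S) ↔ s ∈ Set.Iic (-(ε ω) / h) := by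
        simp only [hSdef, Set.mem_setOf_eq, Set.mem_Iic]
        rw [le_div_iff₀ hh]
        constructor <;> intro hx <;> linarith
      simp only [hFdef, Set.indicator]
      by_cases hsS : (ω, s) ∈ S
      · rw [if_pos hsS, if_pos (hiff.mp hsS)]
      · rw [if_neg hsS, if_neg (fun hc => hsS (hiff.mpr hc))]
    rw [hset, integral_indicator measurableSet_Iic]
    rfl
  have houter : ∀ s : ℝ, (∫ ω, F (ω, s) ∂P) = K s * G (-s * h) := by
    intro s
    have hset : (fun ω => F (ω, s)) = ({ω | ε ω ≤ -s * h}).indicator (fun _ => K s) := by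
      funext ω
      simp only [hFdef, Set.indicator, hSdef, Set.mem_setOf_eq]
    have hms : MeasurableSet {ω | ε ω ≤ -s * h} := hεmeas measurableSet_Iic
    rw [hset, integral_indicator_const _ hms, measureReal_def, hG_eq, ENNReal.toReal_ofReal (hGnn _),
      smul_eq_mul, mul_comm]
  have key : (∫ ω, Kbar K (-(ε ω) / h) ∂P) = ∫ s, K s * G (-s * h) := by
    calc (∫ ω, Kbar K (-(ε ω) / h) ∂P) = ∫ ω, ∫ s, F (ω, s) ∂volume ∂P := by
          refine integral_congr_ae (Filter.Eventually.of_forall fun ω => ?_)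
          exact (hinner ω).symm
      _ = ∫ s, ∫ ω, F (ω, s) ∂P := hswap
      _ = ∫ s, K s * G (-s * h) := by
          refine integral_congr_ae (Filter.Eventually.of_forall fun s => ?_)
          exact houter s
  -- integrability facts
  have hmeasG1 : Measurable fun s : ℝ => G (-s * h) :=
    hGmeas.comp (measurable_id.neg.mul_const h)
  have hint1 : Integrable (fun s => K s * G (-s * h)) := by
    refine hKintg.mono' (hKmeas.mul hmeasG1).aestronglyMeasurable
      (Filter.Eventually.of_forall fun s => ?_)
    rw [Real.norm_eq_abs, abs_mul, abs_of_nonneg (hKnonneg s), abs_of_nonneg (hGnn _)]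
    calc K s * G (-s * h) ≤ K s * 1 :=
          mul_le_mul_of_nonneg_left (hGle1 _) (hKnonneg s)
      _ = K s := mul_one _
  have hsplit : (∫ s, K s * (G (-s * h) - G 0)) = (∫ s, K s * G (-s * h)) - τ := by
    simp_rw [mul_sub]
    rw [integral_sub hint1 (hKintg.mul_const (G 0)), integral_mul_const, hKint, one_mul, hG0]
  have hζ1 : Integrable (fun s => s * K s) := by
    refine (hKintg.add hζ2).mono' (measurable_id.mul hKmeas).aestronglyMeasurable
      (Filter.Eventually.of_forall fun s => ?_)
    rw [Real.norm_eq_abs, abs_mul, abs_of_nonneg (hKnonneg s)]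
    have h1 : |s| ≤ 1 + s ^ 2 := by nlinarith [sq_abs s, sq_nonneg (|s| - 1), abs_nonneg s]
    calc |s| * K s ≤ (1 + s ^ 2) * K s := mul_le_mul_of_nonneg_right h1 (hKnonneg s)
      _ = K s + s ^ 2 * K s := by ring
  have hodd : (∫ s, s * K s) = 0 := by
    have h1 : (∫ s : ℝ, (-s) * K (-s)) = ∫ s, s * K s :=
      integral_neg_eq_self (fun s => s * K s) volume
    have h2 : (∫ s : ℝ, (-s) * K (-s)) = -∫ s, s * K s := by
      simp_rw [hKsymm, neg_mul]
      exact integral_neg _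
    linarith
  -- the main bound function
  have hbA : ∀ s : ℝ, ‖K s * (G (-s * h) - G 0 + s * h * g0)‖ ≤
      ((L₀ : ℝ) / 2 * h ^ 2) * (s ^ 2 * K s) := by
    intro s
    have h1 := hGdiff (-s * h)
    have h2 : G (-s * h) - G 0 - (-s * h) * g0 = G (-s * h) - G 0 + s * h * g0 := by ring
    have h3 : (L₀ : ℝ) / 2 * (-s * h) ^ 2 = (L₀ : ℝ) / 2 * h ^ 2 * s ^ 2 := by ring
    rw [h2, h3] at h1
    rw [Real.norm_eq_abs, abs_mul, abs_of_nonneg (hKnonneg s)]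
    calc K s * |G (-s * h) - G 0 + s * h * g0|
        ≤ K s * ((L₀ : ℝ) / 2 * h ^ 2 * s ^ 2) :=
          mul_le_mul_of_nonneg_left h1 (hKnonneg s)
      _ = ((L₀ : ℝ) / 2 * h ^ 2) * (s ^ 2 * K s) := by ring
  have hmeasA : Measurable fun s : ℝ => K s * (G (-s * h) - G 0 + s * h * g0) :=
    hKmeas.mul ((hmeasG1.sub measurable_const).add
      ((measurable_id.mul_const h).mul_const g0))
  have hAint : Integrable (fun s => K s * (G (-s * h) - G 0 + s * h * g0)) :=
    (hζ2.const_mul ((L₀ : ℝ) / 2 * h ^ 2)).mono' hmeasA.aestronglyMeasurable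
      (Filter.Eventually.of_forall hbA)
  have hfinal : (∫ ω, Kbar K (-(ε ω) / h) ∂P) - τ
      = ∫ s, K s * (G (-s * h) - G 0 + s * h * g0) := by
    rw [key, ← hsplit]
    have hring : ∀ s : ℝ, K s * (G (-s * h) - G 0)
        = K s * (G (-s * h) - G 0 + s * h * g0) - (h * g0) * (s * K s) := fun s => by ring
    rw [integral_congr_ae (Filter.Eventually.of_forall fun s => hring s),
      integral_sub hAint (hζ1.const_mul (h * g0)), integral_const_mul, hodd,
      mul_zero, sub_zero]
  rw [hfinal]
  have hle := norm_integral_le_of_norm_le (hζ2.const_mul ((L₀ : ℝ) / 2 * h ^ 2))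
    (Filter.Eventually.of_forall hbA)
  calc |∫ s, K s * (G (-s * h) - G 0 + s * h * g0)|
      ≤ ∫ s, ((L₀ : ℝ) / 2 * h ^ 2) * (s ^ 2 * K s) := by
        simpa [Real.norm_eq_abs] using hle
    _ = (L₀ : ℝ) / 2 * (∫ t, t ^ 2 * K t) * h ^ 2 := by
        rw [integral_const_mul]; ring
end

section
/- Let τ ∈ (0,1) and let ε be an integrable real random variable with cumulative distribution function G and a density g with respect to Lebesgue measure, such that G(0) = τ. (i) If there exist r > 0 and g_min > 0 with g(s) ≥ g_min for all |s| ≤ r, then for every t with |t| ≤ r, E[ ρ_τ(ε − t) − ρ_τ(ε) ] ≥ (g_min/2) t². (ii) If there exists g_max > 0 with g(s) ≤ g_max for all s ∈ ℝ, then for every t ∈ ℝ, E[ ρ_τ(ε − t) − ρ_τ(ε) ] ≤ (g_max/2) t². -/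
open MeasureTheory

lemma rho_diff (τ x t : ℝ) : rho τ (x - t) - rho τ x = max t x - max 0 x - τ * t := by
  have h1 : max t x = if x - t < 0 then t else x := by
    split_ifs with h
    · exact max_eq_left (by linarith)
    · exact max_eq_right (by linarith)
  have h2 : max 0 x = if x < 0 then 0 else x := by
    split_ifs with h
    · exact max_eq_left (by linarith)
    · exact max_eq_right (by linarith)
  simp only [rho, h1, h2]
  split_ifs <;> ring

lemma ind_int (a b x : ℝ) (hab : a ≤ b) :
    ∫ s in Set.Ioc a b, (if x < s then (1:ℝ) else 0) = max b x - max a x := by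
  have h1 : (fun s => (if x < s then (1:ℝ) else 0)) = (Set.Ioi x).indicator (fun _ => (1:ℝ)) := by
    ext s; simp [Set.indicator, Set.mem_Ioi]
  rw [h1, setIntegral_indicator measurableSet_Ioi]
  have h2 : Set.Ioc a b ∩ Set.Ioi x = Set.Ioc (max a x) b := by
    ext s; simp [Set.mem_Ioc, Set.mem_Ioi, max_lt_iff]
  rw [h2, setIntegral_const, Real.volume_real_Ioc, smul_eq_mul, mul_one]
  rcases le_total x a with h | h
  · rw [max_eq_left h, max_eq_left (le_trans h hab)]
    simp [max_eq_left, sub_nonneg.2 hab]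
  · rw [max_eq_right h]
    rcases le_total x b with h3 | h3
    · rw [max_eq_left h3, max_eq_left (sub_nonneg.2 h3)]
    · rw [max_eq_right h3, max_eq_right (by linarith)]
      ring

lemma central {Ω : Type*} [MeasurableSpace Ω] (P : Measure Ω) [IsProbabilityMeasure P]
    (ε : Ω → ℝ) (hεmeas : Measurable ε) (a b : ℝ) (hab : a ≤ b) :
    ∫ ω, (max b (ε ω) - max a (ε ω)) ∂P
      = ∫ s in Set.Ioc a b, (P {ω | ε ω < s}).toReal := by
  haveI : IsFiniteMeasure (volume.restrict (Set.Ioc a b)) := by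
    constructor
    rw [Measure.restrict_apply_univ, Real.volume_Ioc]
    exact ENNReal.ofReal_lt_top
  have hS : MeasurableSet {p : Ω × ℝ | ε p.1 < p.2} :=
    measurableSet_lt (hεmeas.comp measurable_fst) measurable_snd
  have huncurry : (Function.uncurry fun ω s => if ε ω < s then (1:ℝ) else 0)
      = Set.indicator {p : Ω × ℝ | ε p.1 < p.2} (fun _ => (1:ℝ)) := by
    ext p; simp [Function.uncurry, Set.indicator]
  have hint : Integrable (Function.uncurry fun ω s => if ε ω < s then (1:ℝ) else 0)
      (P.prod (volume.restrict (Set.Ioc a b))) := by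
    rw [huncurry]
    exact (integrable_indicator_iff hS).2 (integrableOn_const (measure_ne_top _ _))
  have swap := MeasureTheory.integral_integral_swap hint
  have hL : ∫ ω, (max b (ε ω) - max a (ε ω)) ∂P
      = ∫ ω, (∫ s in Set.Ioc a b, (if ε ω < s then (1:ℝ) else 0)) ∂P := by
    refine integral_congr_ae (Filter.Eventually.of_forall fun ω => ?_)
    exact (ind_int a b (ε ω) hab).symm
  rw [hL, swap]
  refine setIntegral_congr_ae measurableSet_Ioc (Filter.Eventually.of_forall fun s _ => ?_)
  have : (fun ω => if ε ω < s then (1:ℝ) else 0)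
      = Set.indicator {ω | ε ω < s} (fun _ => (1:ℝ)) := by
    ext ω; simp [Set.indicator]
  rw [this, integral_indicator_const (1:ℝ) (measurableSet_lt hεmeas measurable_const),
    smul_eq_mul, mul_one]
  rfl

/-- let `τ ∈ (0,1)` and let `ε` be an integrable real random
variable with density `g` (with respect to Lebesgue measure) whose cdf `G`
satisfies `G(0) = τ`.
(i) If `g(s) ≥ g_min > 0` for all `|s| ≤ r` (with `r > 0`), then for every
`|t| ≤ r`, `E[ρ_τ(ε − t) − ρ_τ(ε)] ≥ (g_min/2) t²`.
(ii) If `g(s) ≤ g_max` for all `s`, then for every `t`,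
`E[ρ_τ(ε − t) − ρ_τ(ε)] ≤ (g_max/2) t²`. -/
theorem stmt14 {Ω : Type*} [MeasurableSpace Ω] (P : Measure Ω)
    [IsProbabilityMeasure P]
    (τ : ℝ) (hτ : τ ∈ Set.Ioo (0 : ℝ) 1)
    (ε : Ω → ℝ) (hεmeas : Measurable ε) (hεint : Integrable ε P)
    (g : ℝ → ℝ)
    (hdens : Measure.map ε P = volume.withDensity (fun x => ENNReal.ofReal (g x)))
    (hG0 : P {ω | ε ω ≤ 0} = ENNReal.ofReal τ) :
    (∀ r gmin : ℝ, 0 < r → 0 < gmin → (∀ s : ℝ, |s| ≤ r → gmin ≤ g s) →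
        ∀ t : ℝ, |t| ≤ r →
          (gmin / 2) * t ^ 2 ≤ ∫ ω, (rho τ (ε ω - t) - rho τ (ε ω)) ∂P) ∧
      (∀ gmax : ℝ, 0 < gmax → (∀ s : ℝ, g s ≤ gmax) →
        ∀ t : ℝ,
          ∫ ω, (rho τ (ε ω - t) - rho τ (ε ω)) ∂P ≤ (gmax / 2) * t ^ 2) := by
  obtain ⟨hτ0, hτ1⟩ := hτ
  set G : ℝ → ℝ := fun s => (P {ω | ε ω ≤ s}).toReal with hGdef
  -- atomlessness
  have hatom : ∀ c : ℝ, P {ω | ε ω = c} = 0 := by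
    intro c
    have h1 : {ω | ε ω = c} = ε ⁻¹' {c} := rfl
    rw [h1, ← Measure.map_apply hεmeas (measurableSet_singleton c), hdens,
      withDensity_apply _ (measurableSet_singleton c)]
    exact setLIntegral_measure_zero _ _ Real.volume_singleton
  have hlt : ∀ s : ℝ, P {ω | ε ω < s} = P {ω | ε ω ≤ s} := by
    intro s
    refine le_antisymm (measure_mono fun ω (h : ε ω < s) => le_of_lt h) ?_
    calc P {ω | ε ω ≤ s} ≤ P ({ω | ε ω < s} ∪ {ω | ε ω = s}) :=
          measure_mono (fun ω (h : ε ω ≤ s) => lt_or_eq_of_le h)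
      _ ≤ P {ω | ε ω < s} + P {ω | ε ω = s} := measure_union_le _ _
      _ = P {ω | ε ω < s} := by rw [hatom s, add_zero]
  have hmap : ∀ u v : ℝ, P (ε ⁻¹' Set.Ioc u v) = ∫⁻ x in Set.Ioc u v, ENNReal.ofReal (g x) := by
    intro u v
    rw [← Measure.map_apply hεmeas measurableSet_Ioc, hdens,
      withDensity_apply _ measurableSet_Ioc]
  -- split formulas
  have hGpos : ∀ s : ℝ, 0 ≤ s → G s - τ = (P (ε ⁻¹' Set.Ioc 0 s)).toReal := by
    intro s hs
    have hset : {ω | ε ω ≤ s} = {ω | ε ω ≤ 0} ∪ ε ⁻¹' Set.Ioc 0 s := by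
      ext ω
      simp only [Set.mem_setOf_eq, Set.mem_union, Set.mem_preimage, Set.mem_Ioc]
      constructor
      · intro h
        rcases le_or_gt (ε ω) 0 with h0 | h0
        · exact Or.inl h0
        · exact Or.inr ⟨h0, h⟩
      · rintro (h | ⟨h1, h2⟩)
        · linarith
        · exact h2
    have hdisj : Disjoint {ω | ε ω ≤ 0} (ε ⁻¹' Set.Ioc 0 s) := by
      rw [Set.disjoint_left]
      intro ω h1 h2
      exact absurd h2.1 (not_lt.2 h1)
    have : P {ω | ε ω ≤ s} = ENNReal.ofReal τ + P (ε ⁻¹' Set.Ioc 0 s) := by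
      rw [hset, measure_union hdisj (hεmeas measurableSet_Ioc), hG0]
    simp only [hGdef]
    rw [this, ENNReal.toReal_add ENNReal.ofReal_ne_top (measure_ne_top _ _),
      ENNReal.toReal_ofReal hτ0.le]
    ring
  have hGneg : ∀ s : ℝ, s ≤ 0 → G s - τ = -(P (ε ⁻¹' Set.Ioc s 0)).toReal := by
    intro s hs
    have hset : {ω | ε ω ≤ 0} = {ω | ε ω ≤ s} ∪ ε ⁻¹' Set.Ioc s 0 := by
      ext ω
      simp only [Set.mem_setOf_eq, Set.mem_union, Set.mem_preimage, Set.mem_Ioc]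
      constructor
      · intro h
        rcases le_or_gt (ε ω) s with h0 | h0
        · exact Or.inl h0
        · exact Or.inr ⟨h0, h⟩
      · rintro (h | ⟨h1, h2⟩)
        · linarith
        · exact h2
    have hdisj : Disjoint {ω | ε ω ≤ s} (ε ⁻¹' Set.Ioc s 0) := by
      rw [Set.disjoint_left]
      intro ω h1 h2
      exact absurd h2.1 (not_lt.2 h1)
    have : ENNReal.ofReal τ = P {ω | ε ω ≤ s} + P (ε ⁻¹' Set.Ioc s 0) := by
      rw [← hG0, hset, measure_union hdisj (hεmeas measurableSet_Ioc)]
    have h2 : τ = G s + (P (ε ⁻¹' Set.Ioc s 0)).toReal := by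
      have := congrArg ENNReal.toReal this
      rwa [ENNReal.toReal_ofReal hτ0.le,
        ENNReal.toReal_add (measure_ne_top _ _) (measure_ne_top _ _)] at this
    linarith
  -- G measurable & integrable
  have hGmono : Monotone G := fun u v huv =>
    ENNReal.toReal_mono (measure_ne_top _ _) (measure_mono fun ω h => le_trans h huv)
  have hGmeas : Measurable G := hGmono.measurable
  have hGOn : ∀ a b : ℝ, IntegrableOn G (Set.Ioc a b) volume := by
    intro a b
    refine Integrable.mono' (g := fun _ => 1)
      (integrableOn_const (by rw [Real.volume_Ioc]; exact ENNReal.ofReal_ne_top))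
      (hGmeas.aestronglyMeasurable) ?_
    refine Filter.Eventually.of_forall fun s => ?_
    have h0 : 0 ≤ G s := ENNReal.toReal_nonneg
    have h1 : G s ≤ 1 := by
      have := ENNReal.toReal_mono (by simp) (prob_le_one (μ := P) (s := {ω | ε ω ≤ s}))
      simpa using this
    rw [Real.norm_eq_abs, abs_le]
    constructor <;> linarith
  have hConst : ∀ a b c : ℝ, IntegrableOn (fun _ : ℝ => c) (Set.Ioc a b) volume := by
    intro a b c
    exact integrableOn_const (by rw [Real.volume_Ioc]; exact ENNReal.ofReal_ne_top)
  -- key identity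
  have hkey : ∀ t : ℝ, ∫ ω, (rho τ (ε ω - t) - rho τ (ε ω)) ∂P
      = (∫ ω, (max t (ε ω) - max 0 (ε ω)) ∂P) - τ * t := by
    intro t
    have hintmax : Integrable (fun ω => max t (ε ω) - max 0 (ε ω)) P := by
      refine Integrable.mono' (g := fun _ => |t|) (integrable_const _)
        (((measurable_const.max hεmeas).sub (measurable_const.max hεmeas)).aestronglyMeasurable)
        (Filter.Eventually.of_forall fun ω => ?_)
      have := abs_max_sub_max_le_abs t 0 (ε ω)
      simpa using this
    have h1 : (fun ω => rho τ (ε ω - t) - rho τ (ε ω))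
        = fun ω => (max t (ε ω) - max 0 (ε ω)) - τ * t := by
      funext ω; exact rho_diff τ (ε ω) t
    rw [h1, integral_sub hintmax (integrable_const _), integral_const, probReal_univ]
    simp
  have hIocInt : ∀ a b : ℝ, a ≤ b →
      ∫ s in Set.Ioc a b, (G s - τ) = (∫ s in Set.Ioc a b, G s) - τ * (b - a) := by
    intro a b hab
    rw [integral_sub (hGOn a b) (hConst a b τ), setIntegral_const, Real.volume_real_Ioc_of_le hab,
      smul_eq_mul]
    ring
  have hEpos : ∀ t : ℝ, 0 ≤ t → ∫ ω, (rho τ (ε ω - t) - rho τ (ε ω)) ∂P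
      = ∫ s in Set.Ioc 0 t, (G s - τ) := by
    intro t ht
    rw [hkey t, central P ε hεmeas 0 t ht]
    simp only [hlt]
    rw [hIocInt 0 t ht]
    simp only [hGdef]
    ring
  have hEneg : ∀ t : ℝ, t ≤ 0 → ∫ ω, (rho τ (ε ω - t) - rho τ (ε ω)) ∂P
      = -∫ s in Set.Ioc t 0, (G s - τ) := by
    intro t ht
    rw [hkey t]
    have hneg : ∫ ω, (max t (ε ω) - max 0 (ε ω)) ∂P
        = -∫ ω, (max 0 (ε ω) - max t (ε ω)) ∂P := by
      rw [← integral_neg]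
      congr 1
      funext ω
      ring
    rw [hneg, central P ε hεmeas t 0 ht]
    simp only [hlt]
    rw [hIocInt t 0 ht]
    simp only [hGdef]
    ring
  constructor
  · intro r gmin hr hgmin hg t htr
    have hlb : ∀ u v : ℝ, u ≤ v → -r ≤ u → v ≤ r →
        gmin * (v - u) ≤ (P (ε ⁻¹' Set.Ioc u v)).toReal := by
      intro u v huv hu hv
      have h1 : ENNReal.ofReal (gmin * (v - u)) ≤ P (ε ⁻¹' Set.Ioc u v) := by
        rw [hmap u v]
        have h2 : ENNReal.ofReal (gmin * (v - u))
            = ∫⁻ _ in Set.Ioc u v, ENNReal.ofReal gmin := by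
          rw [setLIntegral_const, Real.volume_Ioc, ← ENNReal.ofReal_mul hgmin.le]
        rw [h2]
        refine setLIntegral_mono' measurableSet_Ioc fun x hx => ENNReal.ofReal_le_ofReal ?_
        exact hg x (abs_le.2 ⟨by linarith [hx.1], by linarith [hx.2]⟩)
      have h3 := ENNReal.toReal_mono (measure_ne_top _ _) h1
      rwa [ENNReal.toReal_ofReal (by nlinarith)] at h3
    rcases le_or_gt 0 t with ht | ht
    · rw [hEpos t ht]
      have ht' : t ≤ r := (abs_le.1 htr).2
      have hmono : ∫ s in Set.Ioc 0 t, (gmin * s) ≤ ∫ s in Set.Ioc 0 t, (G s - τ) := by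
        refine setIntegral_mono_on ((continuous_const.mul continuous_id).integrableOn_Ioc)
          ((hGOn 0 t).sub (hConst 0 t τ)) measurableSet_Ioc fun s hs => ?_
        rw [hGpos s hs.1.le]
        have := hlb 0 s hs.1.le (by linarith) (by linarith [hs.2])
        linarith
      have hval : ∫ s in Set.Ioc 0 t, (gmin * s) = gmin / 2 * t ^ 2 := by
        rw [← intervalIntegral.integral_of_le ht, intervalIntegral.integral_const_mul,
          integral_id]
        ring
      linarith
    · rw [hEneg t ht.le]
      have ht' : -r ≤ t := (abs_le.1 htr).1
      have hmono : ∫ s in Set.Ioc t 0, (G s - τ) ≤ ∫ s in Set.Ioc t 0, (gmin * s) := by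
        refine setIntegral_mono_on ((hGOn t 0).sub (hConst t 0 τ))
          ((continuous_const.mul continuous_id).integrableOn_Ioc) measurableSet_Ioc
          fun s hs => ?_
        rw [hGneg s hs.2]
        have := hlb s 0 hs.2 (by linarith [hs.1]) (by linarith)
        linarith
      have hval : ∫ s in Set.Ioc t 0, (gmin * s) = -(gmin / 2 * t ^ 2) := by
        rw [← intervalIntegral.integral_of_le ht.le, intervalIntegral.integral_const_mul,
          integral_id]
        ring
      linarith
  · intro gmax hgmax hgub t
    have hub : ∀ u v : ℝ, u ≤ v → (P (ε ⁻¹' Set.Ioc u v)).toReal ≤ gmax * (v - u) := by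
      intro u v huv
      have h1 : P (ε ⁻¹' Set.Ioc u v) ≤ ENNReal.ofReal (gmax * (v - u)) := by
        rw [hmap u v]
        have h2 : ENNReal.ofReal (gmax * (v - u))
            = ∫⁻ _ in Set.Ioc u v, ENNReal.ofReal gmax := by
          rw [setLIntegral_const, Real.volume_Ioc, ← ENNReal.ofReal_mul hgmax.le]
        rw [h2]
        exact setLIntegral_mono' measurableSet_Ioc fun x _ =>
          ENNReal.ofReal_le_ofReal (hgub x)
      have h3 := ENNReal.toReal_mono ENNReal.ofReal_ne_top h1
      rwa [ENNReal.toReal_ofReal (by nlinarith)] at h3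
    rcases le_or_gt 0 t with ht | ht
    · rw [hEpos t ht]
      have hmono : ∫ s in Set.Ioc 0 t, (G s - τ) ≤ ∫ s in Set.Ioc 0 t, (gmax * s) := by
        refine setIntegral_mono_on ((hGOn 0 t).sub (hConst 0 t τ))
          ((continuous_const.mul continuous_id).integrableOn_Ioc) measurableSet_Ioc
          fun s hs => ?_
        rw [hGpos s hs.1.le]
        have := hub 0 s hs.1.le
        linarith
      have hval : ∫ s in Set.Ioc 0 t, (gmax * s) = gmax / 2 * t ^ 2 := by
        rw [← intervalIntegral.integral_of_le ht, intervalIntegral.integral_const_mul,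
          integral_id]
        ring
      linarith
    · rw [hEneg t ht.le]
      have hmono : ∫ s in Set.Ioc t 0, (gmax * s) ≤ ∫ s in Set.Ioc t 0, (G s - τ) := by
        refine setIntegral_mono_on ((continuous_const.mul continuous_id).integrableOn_Ioc)
          ((hGOn t 0).sub (hConst t 0 τ)) measurableSet_Ioc fun s hs => ?_
        rw [hGneg s hs.2]
        have := hub s 0 hs.2
        linarith
      have hval : ∫ s in Set.Ioc t 0, (gmax * s) = -(gmax / 2 * t ^ 2) := by
        rw [← intervalIntegral.integral_of_le ht.le, intervalIntegral.integral_const_mul,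
          integral_id]
        ring
      linarith
end

section
/- Let Q : ℝ^p → ℝ be convex and differentiable, let θ* ∈ ℝ^p with support S = {j : θ*_j ≠ 0} of cardinality |S| = s ≥ 1, and let λ > 0 satisfy λ ≥ 2‖∇Q(θ*)‖_∞. Let θ̂ be a global minimizer of θ ↦ Q(θ) + λ‖θ‖₁ over ℝ^p, and set δ = θ̂ − θ*. Then δ lies in the cone ‖δ_{Sᶜ}‖₁ ≤ 3‖δ_S‖₁, and consequently ‖δ‖₁ ≤ 4√s · ‖δ‖₂. -/
/-!
Convexity gives the gradient inequality `∇Q(θ*) · δ ≤ Q(θ̂) - Q(θ*)`, and Hölder's inequality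
with `λ ≥ 2‖∇Q(θ*)‖_∞` bounds its left side below by `-(λ/2)‖δ‖₁`. Minimality of `θ̂` bounds
the right side by `λ(‖θ*‖₁ - ‖θ̂‖₁) ≤ λ(‖δ_S‖₁ - ‖δ_{Sᶜ}‖₁)`, because `θ*` vanishes off `S`.
Comparing the two bounds gives the cone condition, and then
`‖δ‖₁ ≤ 4‖δ_S‖₁ ≤ 4√s ‖δ‖₂` by Cauchy–Schwarz on `S`.
-/

open Finset

theorem ConvexOn.fderiv_sub_le {E : Type*} [NormedAddCommGroup E] [NormedSpace ℝ E]
    {f : E → ℝ} {s : Set E} (hf : ConvexOn ℝ s f) {x y : E} (hx : x ∈ s) (hy : y ∈ s)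
    (hfx : DifferentiableAt ℝ f x) :
    fderiv ℝ f x (y - x) ≤ f y - f x := by
  set ℓ : ℝ →ᵃ[ℝ] E := AffineMap.lineMap x y
  have hg : ConvexOn ℝ (ℓ ⁻¹' s) (f ∘ ℓ) := hf.comp_affineMap ℓ
  have hg' : HasDerivAt (f ∘ ℓ) (fderiv ℝ f x (y - x)) 0 :=
    HasFDerivAt.comp_hasDerivAt (0 : ℝ) (by simpa [ℓ] using hfx.hasFDerivAt)
      AffineMap.hasDerivAt_lineMap
  simpa [ℓ, slope_def_field] using
    hg.le_slope_of_hasDerivAt (by simpa [ℓ] using hx) (by simpa [ℓ] using hy) zero_lt_one hg'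

theorem abs_apply_le_mul_sum_abs {ι : Type*} [Fintype ι] [DecidableEq ι]
    (L : (ι → ℝ) →ₗ[ℝ] ℝ) {c : ℝ} (hL : ∀ j, |L (Pi.single j 1)| ≤ c) (v : ι → ℝ) :
    |L v| ≤ c * ∑ j, |v j| := by
  calc |L v| = |∑ j, v j * L (Pi.single j 1)| := by
        conv_lhs => rw [pi_eq_sum_univ' v]
        simp only [map_sum, map_smul, smul_eq_mul]
    _ ≤ ∑ j, |v j| * c := by
        refine (abs_sum_le_sum_abs _ _).trans (sum_le_sum fun j _ => ?_)
        rw [abs_mul]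
        exact mul_le_mul_of_nonneg_left (hL j) (abs_nonneg _)
    _ = c * ∑ j, |v j| := by rw [mul_sum]; simp only [mul_comm]

theorem sum_abs_sub_sum_abs_le_of_support_subset {ι : Type*} [Fintype ι] [DecidableEq ι]
    (S : Finset ι) {x : ι → ℝ} (hx : ∀ j ∉ S, x j = 0) (y : ι → ℝ) :
    ∑ j, |x j| - ∑ j, |y j| ≤ ∑ j ∈ S, |y j - x j| - ∑ j ∈ Sᶜ, |y j - x j| := by
  rw [← sum_add_sum_compl S (fun j => |x j|), ← sum_add_sum_compl S (fun j => |y j|)]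
  have hcompl : ∑ j ∈ Sᶜ, |y j - x j| = ∑ j ∈ Sᶜ, |y j| :=
    sum_congr rfl fun j hj => by rw [hx j (mem_compl.mp hj), sub_zero]
  have hzero : ∑ j ∈ Sᶜ, |x j| = 0 :=
    sum_eq_zero fun j hj => by rw [hx j (mem_compl.mp hj), abs_zero]
  have hS : ∑ j ∈ S, |x j| - ∑ j ∈ S, |y j| ≤ ∑ j ∈ S, |y j - x j| := by
    rw [← sum_sub_distrib]
    exact sum_le_sum fun j _ => by
      rw [abs_sub_comm]; exact abs_sub_abs_le_abs_sub _ _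
  linarith

theorem Finset.sum_abs_le_sqrt_card_mul_sqrt_sum_sq {ι : Type*} [Fintype ι] (S : Finset ι)
    (v : ι → ℝ) : ∑ j ∈ S, |v j| ≤ √(#S : ℝ) * √(∑ j, v j ^ 2) := by
  have hsq : (∑ j ∈ S, |v j|) ^ 2 ≤ (#S : ℝ) * ∑ j, v j ^ 2 := by
    calc (∑ j ∈ S, |v j|) ^ 2 ≤ (#S : ℝ) * ∑ j ∈ S, |v j| ^ 2 := sq_sum_le_card_mul_sum_sq
      _ ≤ (#S : ℝ) * ∑ j, v j ^ 2 := by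
        simp only [sq_abs]
        gcongr
        exact subset_univ S
  rw [← Real.sqrt_mul (Nat.cast_nonneg _)]
  exact Real.le_sqrt_of_sq_le hsq

theorem sum_abs_compl_le_three_mul_sum_abs_of_objective_le {ι : Type*} [Fintype ι]
    [DecidableEq ι] {Q : (ι → ℝ) → ℝ} (hQ : ConvexOn ℝ Set.univ Q) {θstar θhat : ι → ℝ}
    (hQd : DifferentiableAt ℝ Q θstar) (S : Finset ι) (hsupp : ∀ j ∉ S, θstar j = 0)
    {lam : ℝ} (hlam_pos : 0 < lam) (hlam : ∀ j, 2 * |fderiv ℝ Q θstar (Pi.single j 1)| ≤ lam)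
    (hobj : Q θhat + lam * ∑ j, |θhat j| ≤ Q θstar + lam * ∑ j, |θstar j|) :
    ∑ j ∈ Sᶜ, |θhat j - θstar j| ≤ 3 * ∑ j ∈ S, |θhat j - θstar j| := by
  have hgrad : fderiv ℝ Q θstar (θhat - θstar) ≤ Q θhat - Q θstar :=
    hQ.fderiv_sub_le trivial trivial hQd
  have hdual : |fderiv ℝ Q θstar (θhat - θstar)| ≤ lam / 2 * ∑ j, |θhat j - θstar j| :=
    abs_apply_le_mul_sum_abs (fderiv ℝ Q θstar : (ι → ℝ) →ₗ[ℝ] ℝ)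
      (fun j => by rw [ContinuousLinearMap.coe_coe]; linarith [hlam j]) (θhat - θstar)
  have hl1 := sum_abs_sub_sum_abs_le_of_support_subset S hsupp θhat
  set A := ∑ j ∈ S, |θhat j - θstar j|
  set B := ∑ j ∈ Sᶜ, |θhat j - θstar j|
  have hsplit : ∑ j, |θhat j - θstar j| = A + B := (sum_add_sum_compl S _).symm
  have hbasic : -(lam / 2 * (A + B)) ≤ lam * (A - B) :=
    calc -(lam / 2 * (A + B)) ≤ fderiv ℝ Q θstar (θhat - θstar) :=
          neg_le_of_abs_le (hsplit ▸ hdual)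
      _ ≤ Q θhat - Q θstar := hgrad
      _ ≤ lam * (∑ j, |θstar j| - ∑ j, |θhat j|) := by linarith
      _ ≤ lam * (A - B) := mul_le_mul_of_nonneg_left hl1 hlam_pos.le
  have : 0 ≤ 3 * A - B := (mul_nonneg_iff_of_pos_left hlam_pos).1 (by linarith)
  linarith

theorem sum_abs_le_four_mul_sqrt_card_mul_sqrt_sum_sq_of_cone {ι : Type*} [Fintype ι]
    [DecidableEq ι] (S : Finset ι) {v : ι → ℝ}
    (hcone : ∑ j ∈ Sᶜ, |v j| ≤ 3 * ∑ j ∈ S, |v j|) :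
    ∑ j, |v j| ≤ 4 * √(#S : ℝ) * √(∑ j, v j ^ 2) := by
  have hS := S.sum_abs_le_sqrt_card_mul_sqrt_sum_sq v
  rw [← sum_add_sum_compl S]
  linarith

theorem stmt15_general (p : ℕ) (Q : (Fin p → ℝ) → ℝ)
    (hconv : ConvexOn ℝ Set.univ Q) (hdiff : Differentiable ℝ Q)
    (θstar : Fin p → ℝ)
    (S : Finset (Fin p)) (hS : ∀ j, j ∈ S ↔ θstar j ≠ 0)
    (s : ℕ) (hcard : S.card = s)
    (lam : ℝ) (hlampos : 0 < lam)
    (hlam : ∀ j, 2 * |fderiv ℝ Q θstar (Pi.single j 1)| ≤ lam)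
    (θhat : Fin p → ℝ)
    (hmin : ∀ θ : Fin p → ℝ,
      Q θhat + lam * ∑ j, |θhat j| ≤ Q θ + lam * ∑ j, |θ j|) :
    (∑ j ∈ Sᶜ, |θhat j - θstar j|) ≤ 3 * ∑ j ∈ S, |θhat j - θstar j| ∧
      (∑ j, |θhat j - θstar j|) ≤
        4 * Real.sqrt s * Real.sqrt (∑ j, (θhat j - θstar j) ^ 2) := by
  have hsupp : ∀ j ∉ S, θstar j = 0 := fun j hj => by simpa [hS] using hj
  have hcone := sum_abs_compl_le_three_mul_sum_abs_of_objective_le hconv (hdiff θstar) S hsupp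
    hlampos hlam (hmin θstar)
  refine ⟨hcone, ?_⟩
  simpa [hcard] using sum_abs_le_four_mul_sqrt_card_mul_sqrt_sum_sq_of_cone S hcone

/-- let `Q : ℝ^p → ℝ` be convex and differentiable, `θ*` have
support `S = {j : θ*_j ≠ 0}` of cardinality `s ≥ 1`, and
`λ ≥ 2‖∇Q(θ*)‖_∞` (coordinatewise: `2|∂_j Q(θ*)| ≤ λ` for all `j`). If `θ̂`
globally minimizes `θ ↦ Q(θ) + λ‖θ‖₁`, then `δ = θ̂ − θ*` satisfies the cone
condition `‖δ_{Sᶜ}‖₁ ≤ 3‖δ_S‖₁`, and consequently `‖δ‖₁ ≤ 4√s ‖δ‖₂`. -/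
theorem stmt15 (p : ℕ) (Q : (Fin p → ℝ) → ℝ)
    (hconv : ConvexOn ℝ Set.univ Q) (hdiff : Differentiable ℝ Q)
    (θstar : Fin p → ℝ)
    (S : Finset (Fin p)) (hS : ∀ j, j ∈ S ↔ θstar j ≠ 0)
    (s : ℕ) (hcard : S.card = s) (hs : 1 ≤ s)
    (lam : ℝ) (hlampos : 0 < lam)
    (hlam : ∀ j, 2 * |fderiv ℝ Q θstar (Pi.single j 1)| ≤ lam)
    (θhat : Fin p → ℝ)
    (hmin : ∀ θ : Fin p → ℝ,
      Q θhat + lam * ∑ j, |θhat j| ≤ Q θ + lam * ∑ j, |θ j|) :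
    (∑ j ∈ Sᶜ, |θhat j - θstar j|) ≤ 3 * ∑ j ∈ S, |θhat j - θstar j| ∧
      (∑ j, |θhat j - θstar j|) ≤
        4 * Real.sqrt s * Real.sqrt (∑ j, (θhat j - θstar j) ^ 2) :=
  stmt15_general p Q hconv hdiff θstar S hS s hcard lam hlampos hlam θhat hmin
end

section
/- Let Q : ℝ^p → ℝ be convex and differentiable, let θ* ∈ ℝ^p with support S of cardinality |S| = s ≥ 1, and let λ > 0 satisfy λ ≥ 2‖∇Q(θ*)‖_∞. Suppose Q satisfies the restricted strong convexity condition: there is κ > 0 such that for every δ ∈ ℝ^p with ‖δ_{Sᶜ}‖₁ ≤ 3‖δ_S‖₁, Q(θ* + δ) − Q(θ*) − ⟨∇Q(θ*), δ⟩ ≥ κ‖δ‖₂². Let θ̂ be a global minimizer of θ ↦ Q(θ) + λ‖θ‖₁. Then ‖θ̂ − θ*‖₂ ≤ 3√s · λ / κ and ‖θ̂ − θ*‖₁ ≤ 12 s λ / κ. -/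
/-- Gradient inequality for a convex differentiable function on `ℝ^p`. -/
lemma stmt16_grad_ineq {p : ℕ} {Q : (Fin p → ℝ) → ℝ}
    (hconv : ConvexOn ℝ Set.univ Q) (hdiff : Differentiable ℝ Q)
    (x δ : Fin p → ℝ) :
    fderiv ℝ Q x δ ≤ Q (x + δ) - Q x := by
  set g : ℝ → ℝ := fun t => Q (x + t • δ) with hg
  have hgc : ConvexOn ℝ Set.univ g := by
    have := hconv.comp_affineMap (AffineMap.lineMap x (x + δ))
    have heq : (Q ∘ (AffineMap.lineMap x (x + δ))) = g := by
      funext t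
      simp [g, AffineMap.lineMap_apply]
      ring_nf
    rw [heq] at this
    simpa using this
  have hinner : HasDerivAt (fun t : ℝ => x + t • δ) δ 0 := by
    simpa using ((hasDerivAt_id (0 : ℝ)).smul_const δ).const_add x
  have hgd : HasDerivAt g (fderiv ℝ Q x δ) 0 := by
    have h0 : x + (0 : ℝ) • δ = x := by simp
    have := (hdiff (x + (0 : ℝ) • δ)).hasFDerivAt.comp_hasDerivAt 0 hinner
    rw [h0] at this
    exact this
  have := hgc.le_slope_of_hasDerivAt (Set.mem_univ (0 : ℝ)) (Set.mem_univ (1 : ℝ))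
    zero_lt_one hgd
  have hslope : slope g 0 1 = Q (x + δ) - Q x := by
    simp [slope, g]
  rw [hslope] at this
  exact this

/-- Coordinate expansion of the differential. -/
lemma stmt16_fderiv_sum {p : ℕ} {Q : (Fin p → ℝ) → ℝ} (x : Fin p → ℝ)
    (δ : Fin p → ℝ) :
    fderiv ℝ Q x δ = ∑ j, δ j * fderiv ℝ Q x (Pi.single j 1) := by
  have hδ : δ = ∑ j, δ j • (Pi.single j (1 : ℝ) : Fin p → ℝ) := by
    funext k
    simp [Pi.single_apply, Finset.mul_sum, mul_ite]
  conv_lhs => rw [hδ]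
  rw [map_sum]
  simp

/-- let `Q : ℝ^p → ℝ` be convex and differentiable, `θ*` have
support `S` of cardinality `s ≥ 1`, and `λ ≥ 2‖∇Q(θ*)‖_∞` (coordinatewise:
`2|∂_j Q(θ*)| ≤ λ` for all `j`). Suppose `Q` satisfies restricted strong
convexity with curvature `κ > 0` over the cone `‖δ_{Sᶜ}‖₁ ≤ 3‖δ_S‖₁`. If `θ̂`
globally minimizes `θ ↦ Q(θ) + λ‖θ‖₁`, then `‖θ̂ − θ*‖₂ ≤ 3√s λ / κ` and
`‖θ̂ − θ*‖₁ ≤ 12 s λ / κ`. -/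
theorem stmt16 (p : ℕ) (Q : (Fin p → ℝ) → ℝ)
    (hconv : ConvexOn ℝ Set.univ Q) (hdiff : Differentiable ℝ Q)
    (θstar : Fin p → ℝ)
    (S : Finset (Fin p)) (hS : ∀ j, j ∈ S ↔ θstar j ≠ 0)
    (s : ℕ) (hcard : S.card = s) (hs : 1 ≤ s)
    (lam : ℝ) (hlampos : 0 < lam)
    (hlam : ∀ j, 2 * |fderiv ℝ Q θstar (Pi.single j 1)| ≤ lam)
    (κ : ℝ) (hκ : 0 < κ)
    (hRSC : ∀ δ : Fin p → ℝ,
      (∑ j ∈ Sᶜ, |δ j|) ≤ 3 * ∑ j ∈ S, |δ j| →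
        κ * ∑ j, δ j ^ 2 ≤ Q (θstar + δ) - Q θstar - fderiv ℝ Q θstar δ)
    (θhat : Fin p → ℝ)
    (hmin : ∀ θ : Fin p → ℝ,
      Q θhat + lam * ∑ j, |θhat j| ≤ Q θ + lam * ∑ j, |θ j|) :
    Real.sqrt (∑ j, (θhat j - θstar j) ^ 2) ≤ 3 * Real.sqrt s * lam / κ ∧
      (∑ j, |θhat j - θstar j|) ≤ 12 * s * lam / κ := by
  set δ : Fin p → ℝ := fun j => θhat j - θstar j with hδdef
  have hθhat : θstar + δ = θhat := by funext j; simp [δ]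
  set a : ℝ := ∑ j ∈ S, |δ j| with ha
  set b : ℝ := ∑ j ∈ Sᶜ, |δ j| with hb
  have ha0 : 0 ≤ a := Finset.sum_nonneg fun j _ => abs_nonneg _
  have hb0 : 0 ≤ b := Finset.sum_nonneg fun j _ => abs_nonneg _
  have hsplit : ∑ j, |δ j| = a + b := by
    rw [ha, hb, Finset.sum_add_sum_compl S]
  -- gradient bound
  have hgradbd : |fderiv ℝ Q θstar δ| ≤ lam / 2 * (a + b) := by
    rw [stmt16_fderiv_sum, ← hsplit]
    calc |∑ j, δ j * fderiv ℝ Q θstar (Pi.single j 1)|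
        ≤ ∑ j, |δ j * fderiv ℝ Q θstar (Pi.single j 1)| :=
          Finset.abs_sum_le_sum_abs _ _
      _ ≤ ∑ j, |δ j| * (lam / 2) := by
          refine Finset.sum_le_sum fun j _ => ?_
          rw [abs_mul]
          exact mul_le_mul_of_nonneg_left (by linarith [hlam j]) (abs_nonneg _)
      _ = lam / 2 * ∑ j, |δ j| := by rw [← Finset.sum_mul]; ring
  -- ℓ¹ comparison from minimality
  have hl1cmp : (∑ j, |θstar j|) - (∑ j, |θhat j|) ≤ a - b := by
    have h1 : ∑ j, |θstar j| = ∑ j ∈ S, |θstar j| := by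
      rw [← Finset.sum_add_sum_compl S]
      have : ∑ j ∈ Sᶜ, |θstar j| = 0 := by
        refine Finset.sum_eq_zero fun j hj => ?_
        have := (hS j).not
        rw [Finset.mem_compl] at hj
        have hz : θstar j = 0 := by
          by_contra hne; exact hj ((hS j).mpr hne)
        simp [hz]
      linarith
    have h2 : ∑ j, |θhat j| = (∑ j ∈ S, |θhat j|) + b := by
      rw [← Finset.sum_add_sum_compl S (fun j => |θhat j|)]
      congr 1
      refine Finset.sum_congr rfl fun j hj => ?_
      rw [Finset.mem_compl] at hj
      have hz : θstar j = 0 := by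
        by_contra hne; exact hj ((hS j).mpr hne)
      simp [δ, hz]
    have h3 : ∑ j ∈ S, |θstar j| - a ≤ ∑ j ∈ S, |θhat j| := by
      rw [ha, ← Finset.sum_sub_distrib]
      refine Finset.sum_le_sum fun j _ => ?_
      have : θhat j = θstar j + δ j := by simp [δ]
      rw [this]
      have := abs_add_le (θstar j + δ j) (-δ j)
      simp at this
      linarith [this]
    rw [h1, h2]
    linarith
  have hmin' : Q θhat - Q θstar ≤ lam * (a - b) := by
    have := hmin θstar
    nlinarith [hl1cmp]
  have hgrad : fderiv ℝ Q θstar δ ≤ Q θhat - Q θstar := by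
    have := stmt16_grad_ineq hconv hdiff θstar δ
    rwa [hθhat] at this
  -- cone condition
  have hcone : b ≤ 3 * a := by
    have h1 : -(lam / 2 * (a + b)) ≤ fderiv ℝ Q θstar δ := neg_le_of_abs_le hgradbd
    nlinarith
  -- RSC
  set T : ℝ := ∑ j, δ j ^ 2 with hT
  have hT0 : 0 ≤ T := Finset.sum_nonneg fun j _ => sq_nonneg _
  have hRSC' : κ * T ≤ 3 * lam / 2 * a := by
    have h := hRSC δ (by rw [← ha, ← hb]; exact hcone)
    rw [hθhat] at h
    have h1 : -(lam / 2 * (a + b)) ≤ fderiv ℝ Q θstar δ := neg_le_of_abs_le hgradbd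
    nlinarith
  -- Cauchy–Schwarz on S
  have hCS : a ^ 2 ≤ s * T := by
    have h1 : a ^ 2 ≤ S.card * ∑ j ∈ S, |δ j| ^ 2 := sq_sum_le_card_mul_sum_sq
    have h2 : ∑ j ∈ S, |δ j| ^ 2 ≤ T := by
      rw [hT]
      refine Finset.sum_le_sum_of_subset_of_nonneg (Finset.subset_univ S)
        (fun j _ _ => sq_nonneg _) |>.trans_eq' ?_
      exact Finset.sum_congr rfl fun j _ => by rw [sq_abs]
    calc a ^ 2 ≤ S.card * ∑ j ∈ S, |δ j| ^ 2 := h1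
      _ ≤ s * T := by
          rw [hcard]
          exact mul_le_mul_of_nonneg_left h2 (Nat.cast_nonneg s)
  set r : ℝ := Real.sqrt T with hr
  have hr0 : 0 ≤ r := Real.sqrt_nonneg _
  have hr2 : r ^ 2 = T := Real.sq_sqrt hT0
  have hsq0 : (0 : ℝ) ≤ (s : ℝ) := Nat.cast_nonneg s
  have hsqs : Real.sqrt s * Real.sqrt s = (s : ℝ) := Real.mul_self_sqrt hsq0
  have hssqrt0 : 0 ≤ Real.sqrt (s : ℝ) := Real.sqrt_nonneg _
  have haT : a ≤ Real.sqrt s * r := by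
    have h1 : a ^ 2 ≤ (Real.sqrt s * r) ^ 2 := by
      rw [mul_pow, hr2]
      calc a ^ 2 ≤ s * T := hCS
        _ = Real.sqrt s ^ 2 * T := by rw [Real.sq_sqrt hsq0]
    have h2 : 0 ≤ Real.sqrt s * r := mul_nonneg hssqrt0 hr0
    nlinarith
  -- ℓ₂ bound
  have hl2 : r ≤ 3 * Real.sqrt s * lam / κ := by
    rw [le_div_iff₀ hκ]
    -- κ r² ≤ (3λ/2) √s r, want r κ ≤ 3 √s λ
    have hk : κ * r ^ 2 ≤ 3 * lam / 2 * (Real.sqrt s * r) := by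
      calc κ * r ^ 2 = κ * T := by rw [hr2]
        _ ≤ 3 * lam / 2 * a := hRSC'
        _ ≤ 3 * lam / 2 * (Real.sqrt s * r) := by
            exact mul_le_mul_of_nonneg_left haT (by linarith)
    have hsp : (0 : ℝ) < Real.sqrt s := Real.sqrt_pos.mpr
      (by exact_mod_cast Nat.lt_of_lt_of_le Nat.zero_lt_one hs)
    rcases eq_or_lt_of_le hr0 with h | h
    · rw [← h, zero_mul]
      positivity
    · nlinarith [mul_pos (mul_pos hsp hlampos) h]
  refine ⟨hl2, ?_⟩
  -- ℓ₁ bound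
  have hl1 : ∑ j, |δ j| ≤ 4 * (Real.sqrt s * r) := by
    rw [hsplit]
    linarith [haT]
  calc ∑ j, |δ j| ≤ 4 * (Real.sqrt s * r) := hl1
    _ ≤ 4 * (Real.sqrt s * (3 * Real.sqrt s * lam / κ)) := by
        refine mul_le_mul_of_nonneg_left ?_ (by norm_num)
        exact mul_le_mul_of_nonneg_left hl2 hssqrt0
    _ = 12 * (Real.sqrt s * Real.sqrt s) * lam / κ := by ring
    _ = 12 * s * lam / κ := by rw [hsqs]
end
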